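/- arXiv:2302.03403 — 6 statements merged into one kernel-verified Lean document; each statement's English description precedes it below -/
import Mathlib

section
/- Let τ_i, τ_j be real n×n matrices with τ_i² = -2τ_i, τ_j² = -2τ_j, τ_i τ_j τ_i = α τ_i and τ_j τ_i τ_j = α τ_j, where α ∈ {1, -1}. Then for every positive integer r, [(1+τ_i)(1+τ_j)]^r (1+τ_i) - [(1+τ_j)(1+τ_i)]^r (1+τ_j) = α^r · E_{2r}(1, α) · (τ_i - τ_j), where E_n(x, a) denotes the Dickson polynomial of the second kind defined by E_0 = 1, E_1 = x, and E_n(x,a) = x E_{n-1}(x,a) - a E_{n-2}(x,a). -/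
/-!
Write `D r = ((1+τi)(1+τj))^r (1+τi)`. A direct computation in the relations gives
`D (r+2) = (α-2) D (r+1) - D r + S` for an element `S` symmetric in `τi, τj` and killed by both. So the difference in the theorem satisfies the linear recurrence
`x (r+2) = (α-2) x (r+1) - x r`. From `E (n+4) = (x²-2a) E (n+2) - a² E n`, the scalars
`α^r E_{2r}(1, α)` satisfy the same recurrence when `α² = 1`, and the first two terms agree.
-/

/-- Dickson polynomials of the second kind: `E 0 = 1`, `E 1 = x`,
`E (n+2) = x * E (n+1) - a * E n`. -/
noncomputable def dicksonE (x a : ℝ) : ℕ → ℝ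
  | 0 => 1
  | 1 => x
  | n + 2 => x * dicksonE x a (n + 1) - a * dicksonE x a n

theorem dicksonE_add_four (x a : ℝ) (n : ℕ) :
    dicksonE x a (n + 4) = (x ^ 2 - 2 * a) * dicksonE x a (n + 2) - a ^ 2 * dicksonE x a n := by
  have h2 : dicksonE x a (n + 2) = x * dicksonE x a (n + 1) - a * dicksonE x a n := rfl
  have h3 : dicksonE x a (n + 3) = x * dicksonE x a (n + 2) - a * dicksonE x a (n + 1) := rfl
  have h4 : dicksonE x a (n + 4) = x * dicksonE x a (n + 3) - a * dicksonE x a (n + 2) := rfl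
  rw [h4, h3]
  linear_combination a * h2

theorem pow_mul_dicksonE_one_two_mul_add_two {α : ℝ} (hα : α ^ 2 = 1) (r : ℕ) :
    α ^ (r + 2) * dicksonE 1 α (2 * (r + 2)) =
      (α - 2) * (α ^ (r + 1) * dicksonE 1 α (2 * (r + 1))) - α ^ r * dicksonE 1 α (2 * r) := by
  rw [show 2 * (r + 2) = 2 * r + 4 by ring, show 2 * (r + 1) = 2 * r + 2 by ring,
    dicksonE_add_four]
  linear_combination (-(2 * α ^ (r + 1) * dicksonE 1 α (2 * r + 2)
    + α ^ r * (1 + α ^ 2) * dicksonE 1 α (2 * r))) * hα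

section

variable {k R : Type*} [CommRing k] [Ring R] [Algebra k R]

def altProd (i j : R) (r : ℕ) : R := ((1 + i) * (1 + j)) ^ r * (1 + i)

/-- Annihilated by `i` and `j` under the relations below, hence fixed by `1 + i` and `1 + j`;
for `α = 1` it is half the sum of the dihedral group of order 6 that these two involutions
generate. -/
def pairInvariant (α : k) (i j : R) : R :=
  (4 - α) • 1 + (2 : k) • (i + j) + i * j + j * i

theorem pairInvariant_comm (α : k) (i j : R) : pairInvariant α i j = pairInvariant α j i := by
  unfold pairInvariant; module

variable {α : k} {i j : R}

theorem mul_self_eq_smul (hi : i * i = -2 * i) : i * i = (-2 : k) • i := by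
  rw [hi, Algebra.smul_def, map_neg, map_ofNat]

theorem mul_mul_self_eq_smul (hi : i * i = -2 * i) (x : R) :
    x * i * i = (-2 : k) • (x * i) := by
  rw [mul_assoc, mul_self_eq_smul (k := k) hi, mul_smul_comm]

theorem mul_pairInvariant (hi : i * i = -2 * i) (hiji : i * j * i = α • i) :
    i * pairInvariant α i j = 0 := by
  have hi' := mul_self_eq_smul (k := k) hi
  simp only [pairInvariant, mul_add, mul_smul_comm, mul_one, ← mul_assoc, hi', hiji,
    smul_mul_assoc]
  module

theorem altProd_add (r s : ℕ) :
    altProd i j (r + s) = ((1 + i) * (1 + j)) ^ r * altProd i j s := by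
  rw [altProd, altProd, pow_add, mul_assoc]

theorem altProd_one (hi : i * i = -2 * i) (hiji : i * j * i = α • i) :
    altProd i j 1 = 1 + α • i + j + i * j + j * i := by
  have hi' := mul_self_eq_smul (k := k) hi
  simp only [altProd, pow_one, mul_add, add_mul, mul_one, one_mul, hi', hiji]
  module

variable (hi : i * i = -2 * i) (hj : j * j = -2 * j)
  (hiji : i * j * i = α • i) (hjij : j * i * j = α • j)
include hi hj hiji hjij

theorem pow_mul_pairInvariant (r : ℕ) :
    ((1 + i) * (1 + j)) ^ r * pairInvariant α i j = pairInvariant α i j := by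
  have hP : (1 + i) * pairInvariant α i j = pairInvariant α i j := by
    rw [add_mul, one_mul, mul_pairInvariant hi hiji, add_zero]
  have hQ : (1 + j) * pairInvariant α i j = pairInvariant α i j := by
    rw [add_mul, one_mul, pairInvariant_comm, mul_pairInvariant hj hjij, add_zero]
  induction r with
  | zero => rw [pow_zero, one_mul]
  | succ r ih => rw [pow_succ, mul_assoc, mul_assoc, hQ, hP, ih]

theorem altProd_two :
    altProd i j 2 = (α - 2) • altProd i j 1 - altProd i j 0 + pairInvariant α i j := by
  have hi' := mul_self_eq_smul (k := k) hi
  have hj' := mul_self_eq_smul (k := k) hj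
  rw [altProd_add 1 1, altProd_one hi hiji, pow_one, altProd, pow_zero, one_mul, pairInvariant]
  simp only [mul_add, add_mul, mul_one, one_mul, mul_smul_comm, smul_mul_assoc,
    ← mul_assoc, hi', hj', hiji, hjij, mul_mul_self_eq_smul (k := k) hj, smul_add, smul_smul]
  module

theorem altProd_add_two (r : ℕ) :
    altProd i j (r + 2) =
      (α - 2) • altProd i j (r + 1) - altProd i j r + pairInvariant α i j := by
  rw [altProd_add r 2, altProd_two hi hj hiji hjij, mul_add, mul_sub, mul_smul_comm,
    ← altProd_add, ← altProd_add, add_zero, pow_mul_pairInvariant hi hj hiji hjij]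

theorem altProd_sub_altProd_add_two (r : ℕ) :
    altProd i j (r + 2) - altProd j i (r + 2) =
      (α - 2) • (altProd i j (r + 1) - altProd j i (r + 1)) - (altProd i j r - altProd j i r) := by
  rw [altProd_add_two hi hj hiji hjij, altProd_add_two hj hi hjij hiji, pairInvariant_comm]
  module

theorem altProd_sub_altProd_one :
    altProd i j 1 - altProd j i 1 = (α - 1) • (i - j) := by
  rw [altProd_one hi hiji, altProd_one hj hjij]
  module

end

theorem stmt_2 {n : ℕ} (τi τj : Matrix (Fin n) (Fin n) ℝ) (α : ℝ)
    (hα : α = 1 ∨ α = -1)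
    (hi : τi * τi = -2 * τi) (hj : τj * τj = -2 * τj)
    (hiji : τi * τj * τi = α • τi) (hjij : τj * τi * τj = α • τj) :
    ∀ r : ℕ, 0 < r →
      ((1 + τi) * (1 + τj)) ^ r * (1 + τi) - ((1 + τj) * (1 + τi)) ^ r * (1 + τj)
        = (α ^ r * dicksonE 1 α (2 * r)) • (τi - τj) := by
  have hα2 : α ^ 2 = 1 := by rcases hα with rfl | rfl <;> norm_num
  suffices h : ∀ r, altProd τi τj r - altProd τj τi r = (α ^ r * dicksonE 1 α (2 * r)) • (τi - τj)
    from fun r _ => h r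
  intro r
  induction r using Nat.twoStepInduction with
  | zero => simp [altProd, dicksonE]
  | one =>
    rw [altProd_sub_altProd_one hi hj hiji hjij]
    congr 1
    simp only [dicksonE]
    linear_combination hα2
  | more r ih₀ ih₁ =>
    rw [altProd_sub_altProd_add_two hi hj hiji hjij, ih₀, ih₁,
      pow_mul_dicksonE_one_two_mul_add_two hα2]
    module
end

section
/- Fix n ≥ 3 and signs f_1, ..., f_n ∈ {1, -1}. For each i (indices mod n), let ν_i ∈ ℝ^n be the vector with ν_i(i) = -2, ν_i(i-1) = ν_i(i+1) = f_i, and all other coordinates 0. Then the set {ν_1, ..., ν_n} is linearly independent over ℝ unless either (a) f_i = 1 for all i, or (b) f_i = -1 for all i and n is even. -/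
/-! Put `d j = f j * c j` for a vanishing combination `∑ c i • ν i = 0`. Coordinate `j` of the
combination says `2 f_j d_j = d_{j-1} + d_{j+1}`, and `|f_j| = 1`, so `d` obeys a maximum
principle: where `|d|` is maximal, both neighbours equal `f_j d_j`. Around the cycle this forces
`|d|` to be constant and `d_{j+1} = f_j d_j = d_{j-1}`; if `d ≠ 0`, comparing the two gives
`f_{j+1} = f_j`. So `f` is constant; `f ≡ -1` makes `d` alternate, which closes up only for
even `n`. -/

open Finset

lemma ZMod.forall_of_add_one {n : ℕ} [NeZero n] {P : ZMod n → Prop} (a : ZMod n) (ha : P a)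
    (hstep : ∀ j, P j → P (j + 1)) (j : ZMod n) : P j := by
  have hk : ∀ k : ℕ, P (a + k) := by
    intro k
    induction k with
    | zero => simpa using ha
    | succ k ih => simpa [add_assoc] using hstep _ ih
  simpa using hk (j - a).val

lemma ZMod.natCast_ne_zero_of_lt {n k : ℕ} (hk : 0 < k) (hkn : k < n) : (k : ZMod n) ≠ 0 := by
  rw [Ne, ZMod.natCast_eq_zero_iff]
  exact fun h => (Nat.le_of_dvd hk h).not_gt hkn

lemma eq_and_eq_of_two_mul_eq_add {a b x : ℝ} (ha : |a| ≤ |x|) (hb : |b| ≤ |x|)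
    (h : 2 * x = a + b) : a = x ∧ b = x := by
  rcases abs_le.mp ha with ⟨ha₁, ha₂⟩
  rcases abs_le.mp hb with ⟨hb₁, hb₂⟩
  constructor <;> cases abs_cases x <;> linarith

section SignedCycleVector

variable {R : Type*} {n : ℕ}

def signedCycleVector [Ring R] (f : ZMod n → R) (i : ZMod n) : ZMod n → R :=
  fun j => if j = i then -2 else if j = i + 1 ∨ j = i - 1 then f i else 0

lemma signedCycleVector_apply [Ring R] (hn : 3 ≤ n) (f : ZMod n → R) (i j : ZMod n) :
    signedCycleVector f i j =
      (if i = j then -2 else 0) + (if i = j - 1 then f i else 0) +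
        (if i = j + 1 then f i else 0) := by
  have h₁ : ((1 : ℕ) : ZMod n) ≠ 0 := ZMod.natCast_ne_zero_of_lt one_pos (by omega)
  have h₂ : ((2 : ℕ) : ZMod n) ≠ 0 := ZMod.natCast_ne_zero_of_lt two_pos (by omega)
  push_cast at h₁ h₂
  have hm : j - 1 ≠ j := fun h => h₁ (by linear_combination -h)
  have hp : j + 1 ≠ j := fun h => h₁ (by linear_combination h)
  have hmp : j - 1 ≠ j + 1 := fun h => h₂ (by linear_combination -h)
  have e₁ : j = i + 1 ↔ i = j - 1 := by rw [eq_sub_iff_add_eq, eq_comm]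
  have e₂ : j = i - 1 ↔ i = j + 1 := by rw [eq_sub_iff_add_eq, eq_comm]
  simp only [signedCycleVector, e₁, e₂, eq_comm (a := j)]
  by_cases h : i = j
  · subst h; simp [hm.symm, hp.symm]
  by_cases h' : i = j - 1
  · subst h'; simp [hm, hmp]
  by_cases h'' : i = j + 1
  · subst h''; simp [hp, hmp.symm]
  simp [h, h', h'']

lemma sum_mul_signedCycleVector_apply [CommRing R] [NeZero n] (hn : 3 ≤ n)
    (f c : ZMod n → R) (j : ZMod n) :
    ∑ i, c i * signedCycleVector f i j =
      -2 * c j + c (j - 1) * f (j - 1) + c (j + 1) * f (j + 1) := by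
  simp [signedCycleVector_apply hn, mul_add, sum_add_distrib, mul_ite, mul_comm]

end SignedCycleVector

def IsSignedHarmonic {n : ℕ} (f d : ZMod n → ℝ) : Prop :=
  ∀ j, 2 * (f j * d j) = d (j - 1) + d (j + 1)

namespace IsSignedHarmonic

variable {n : ℕ} [NeZero n] {f d : ZMod n → ℝ}

lemma neighbours_eq (hd : IsSignedHarmonic f d) (hf : ∀ j, |f j| = 1) (j : ZMod n) :
    d (j - 1) = f j * d j ∧ d (j + 1) = f j * d j := by
  obtain ⟨j₀, -, hj₀⟩ := exists_max_image univ (fun j => |d j|) univ_nonempty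
  have hmax : ∀ j, |d j| ≤ |d j₀| := fun j => hj₀ j (mem_univ j)
  have key : ∀ j, |d j| = |d j₀| → d (j - 1) = f j * d j ∧ d (j + 1) = f j * d j := by
    intro j hj
    have hfd : |f j * d j| = |d j₀| := by rw [abs_mul, hf, one_mul, hj]
    exact eq_and_eq_of_two_mul_eq_add (hfd ▸ hmax _) (hfd ▸ hmax _) (hd j)
  have hconst : ∀ j, |d j| = |d j₀| := ZMod.forall_of_add_one j₀ rfl fun j hj => by
    rw [(key j hj).2, abs_mul, hf, one_mul, hj]
  exact key j (hconst j)

lemma ne_zero (hd : IsSignedHarmonic f d) (hf : ∀ j, |f j| = 1) {i : ZMod n} (hi : d i ≠ 0)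
    (j : ZMod n) : d j ≠ 0 :=
  ZMod.forall_of_add_one (P := fun j => d j ≠ 0) i hi (fun j hj => by
    rw [(hd.neighbours_eq hf j).2]
    exact mul_ne_zero (fun h => by simpa [h] using hf j) hj) j

lemma sign_eq_sign_zero (hd : IsSignedHarmonic f d) (hf : ∀ j, f j = 1 ∨ f j = -1) {i : ZMod n}
    (hi : d i ≠ 0) (j : ZMod n) : f j = f 0 := by
  have hf₁ : ∀ j, |f j| = 1 := fun j => (abs_eq zero_le_one).mpr (hf j)
  have hstep : ∀ j, f (j + 1) = f j := by
    intro j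
    have hback : d j = f (j + 1) * (f j * d j) := by
      simpa [← (hd.neighbours_eq hf₁ j).2] using (hd.neighbours_eq hf₁ (j + 1)).1
    have hprod : f (j + 1) * f j = 1 :=
      (mul_eq_left₀ (hd.ne_zero hf₁ hi j)).mp (by linear_combination -hback)
    have hsq : f j * f j = 1 := mul_self_eq_one_iff.mpr (hf j)
    linear_combination (-f (j + 1)) * hsq + f j * hprod
  exact ZMod.forall_of_add_one (P := fun j => f j = f 0) 0 rfl (fun j hj => (hstep j).trans hj) j

end IsSignedHarmonic

lemma even_of_add_one_eq_neg {n : ℕ} [NeZero n] {d : ZMod n → ℝ} (h : ∀ j, d (j + 1) = -d j)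
    (h₀ : d 0 ≠ 0) : Even n := by
  have hpow : ∀ k : ℕ, d k = (-1) ^ k * d 0 := by
    intro k
    induction k with
    | zero => simp
    | succ k ih => rw [Nat.cast_succ, h, ih, pow_succ]; ring
  have hn : d 0 = (-1) ^ n * d 0 := by simpa using hpow n
  refine (neg_one_pow_eq_one_iff_even (R := ℝ) (by norm_num)).mp ?_
  exact (mul_eq_right₀ h₀).mp hn.symm

theorem stmt_6 (n : ℕ) (hn : 3 ≤ n) [NeZero n] (f : ZMod n → ℝ)
    (hf : ∀ i, f i = 1 ∨ f i = -1)
    (ν : ZMod n → ZMod n → ℝ)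
    (hν : ∀ i j, ν i j =
      if j = i then -2 else if j = i + 1 ∨ j = i - 1 then f i else 0)
    (hnot : ¬ ((∀ i, f i = 1) ∨ ((∀ i, f i = -1) ∧ Even n))) :
    LinearIndependent ℝ ν := by
  obtain rfl : ν = signedCycleVector f := funext fun i => funext (hν i)
  have hf₁ : ∀ j, |f j| = 1 := fun j => (abs_eq zero_le_one).mpr (hf j)
  rw [Fintype.linearIndependent_iff]
  intro c hc
  set d : ZMod n → ℝ := fun j => f j * c j
  have hd : IsSignedHarmonic f d := by
    intro j
    have hj := congrFun hc j
    simp only [Finset.sum_apply, Pi.smul_apply, smul_eq_mul, Pi.zero_apply,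
      sum_mul_signedCycleVector_apply hn] at hj
    have hsq : f j * f j = 1 := mul_self_eq_one_iff.mpr (hf j)
    linear_combination -hj + 2 * c j * hsq
  by_contra! ⟨i, hi⟩
  have hdi : d i ≠ 0 := mul_ne_zero (fun h => by simpa [h] using hf₁ i) hi
  have hconst := hd.sign_eq_sign_zero hf hdi
  rcases hf 0 with h₀ | h₀
  · exact hnot (Or.inl fun j => (hconst j).trans h₀)
  · refine hnot (Or.inr ⟨fun j => (hconst j).trans h₀, even_of_add_one_eq_neg (fun j => ?_)
      (hd.ne_zero hf₁ hdi 0)⟩)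
    rw [(hd.neighbours_eq hf₁ j).2, hconst, h₀, neg_one_mul]
end

section
/- Let n ≥ 3 and signs f_1, ..., f_n ∈ {1, -1} with cyclic indexing. The n×n symmetric matrix B with B(i,i) = 2f_i, B(i, i±1) = -1 (mod n), and B(i,j) = 0 otherwise, is singular if and only if either f_i = 1 for all i, or (f_i = -1 for all i and n is even). -/
/-! A kernel vector `x` of `B` satisfies `2 f_i x_i = x_{i+1} + x_{i-1}`. Where `|x_i|` is
maximal this forces `x_{i+1} = x_{i-1} = f_i x_i` (equality in the triangle inequality), so `|x|`
is again maximal at `i + 1`; going once around the cycle, the kernel consists exactly of the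
vectors with `x_{i±1} = f_i x_i`. For a nonzero such vector every `x_i` is nonzero, and comparing
`x_{i+1} = f_i x_i` with `x_i = f_{i+1} x_{i+1}` gives `f_{i+1} = f_i`. So `f` is constant; if
`f = -1` then `x_{i+1} = -x_i`, and closing the cycle forces `(-1)^n = 1`. Conversely the constant
vector and, for even `n`, the alternating vector lie in the kernel. -/

open Matrix

theorem ZMod.two_ne_zero_of_three_le {n : ℕ} (hn : 3 ≤ n) : (2 : ZMod n) ≠ 0 := by
  rw [← Nat.cast_ofNat, Ne, ZMod.natCast_eq_zero_iff]
  exact fun h => absurd (Nat.le_of_dvd two_pos h) (by omega)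

theorem ZMod.forall_of_add_one_s7 {n : ℕ} [NeZero n] {P : ZMod n → Prop} {i₀ : ZMod n}
    (h₀ : P i₀) (hsucc : ∀ i, P i → P (i + 1)) (i : ZMod n) : P i := by
  have key : ∀ k : ℕ, P (i₀ + k) := by
    intro k
    induction k with
    | zero => simpa using h₀
    | succ k ih => simpa [add_assoc] using hsucc _ ih
  simpa using key (i - i₀).val

theorem neg_one_pow_val_add_one {n : ℕ} [NeZero n] {R : Type*} [Monoid R] [HasDistribNeg R]
    (hn : Even n) (i : ZMod n) : (-1 : R) ^ (i + 1).val = -(-1) ^ i.val := by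
  have h1 : 1 < n := by
    obtain ⟨k, rfl⟩ := hn
    have := NeZero.ne (k + k)
    omega
  have hmod : ∀ m, (-1 : R) ^ (m % n) = (-1) ^ m := fun m => by
    conv_rhs => rw [← Nat.div_add_mod m n, pow_add, pow_mul, hn.neg_one_pow, one_pow, one_mul]
  rw [ZMod.val_add, ZMod.val_one_eq_one_mod, Nat.mod_eq_of_lt h1, hmod, pow_succ, mul_neg_one]

theorem eq_of_abs_le_of_add_eq_two_mul {R : Type*} [CommRing R] [LinearOrder R]
    [IsStrictOrderedRing R] {a b d : R} (ha : |a| ≤ |d|) (hb : |b| ≤ |d|) (h : a + b = 2 * d) :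
    a = d ∧ b = d := by
  obtain ⟨ha₁, ha₂⟩ := abs_le.mp ha
  obtain ⟨hb₁, hb₂⟩ := abs_le.mp hb
  rcases abs_cases d with ⟨hd, _⟩ | ⟨hd, _⟩ <;> rw [hd] at ha₁ ha₂ hb₁ hb₂ <;>
    constructor <;> linarith

section SignedCycle

variable {n : ℕ} {R : Type*}

def signedCycleMatrix [Ring R] (f : ZMod n → R) : Matrix (ZMod n) (ZMod n) R :=
  of fun i j => if i = j then 2 * f i else if j = i + 1 ∨ j = i - 1 then -1 else 0

theorem signedCycleMatrix_mulVec [NeZero n] [Ring R] (h2 : (2 : ZMod n) ≠ 0) (f x : ZMod n → R)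
    (i : ZMod n) : (signedCycleMatrix f *ᵥ x) i = 2 * f i * x i - x (i + 1) - x (i - 1) := by
  have h1 : (1 : ZMod n) ≠ 0 := fun h => h2 (by rw [← one_add_one_eq_two, h, add_zero])
  have hne₁ : i + 1 ≠ i := fun h => h1 (by linear_combination h)
  have hne₂ : i - 1 ≠ i := fun h => h1 (by linear_combination -h)
  have hne₃ : i + 1 ≠ i - 1 := fun h => h2 (by linear_combination h)
  have hentry : ∀ j, signedCycleMatrix f i j * x j = (if j = i then 2 * f i * x i else 0)
      - (if j = i + 1 then x (i + 1) else 0) - (if j = i - 1 then x (i - 1) else 0) := by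
    intro j
    simp only [signedCycleMatrix, of_apply]
    obtain rfl | hj := eq_or_ne j i
    · simp [hne₁.symm, hne₂.symm]
    obtain rfl | hj₁ := eq_or_ne j (i + 1)
    · simp [hne₁, hne₃, h1]
    obtain rfl | hj₂ := eq_or_ne j (i - 1)
    · simp [hne₂, hne₂.symm, hne₃.symm]
    · simp [hj, hj.symm, hj₁, hj₂]
  simp only [mulVec, dotProduct, hentry, Finset.sum_sub_distrib, Finset.sum_ite_eq',
    Finset.mem_univ, if_true]

section Ring

variable [Ring R] [NoZeroDivisors R] {f x : ZMod n → R}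

theorem ZMod.ne_zero_of_apply_add_one_eq_mul [NeZero n] (hf : ∀ i, f i ≠ 0)
    (hshift : ∀ i, x (i + 1) = f i * x i) (hx : x ≠ 0) (i : ZMod n) : x i ≠ 0 := by
  obtain ⟨i₀, hi₀⟩ := Function.ne_iff.mp hx
  exact ZMod.forall_of_add_one_s7 (P := fun i => x i ≠ 0) hi₀
    (fun i hi => by rw [hshift]; exact mul_ne_zero (hf i) hi) i

theorem ZMod.even_of_apply_add_one_eq_neg [CharZero R] (hshift : ∀ i, x (i + 1) = -x i)
    (hx : x 0 ≠ 0) : Even n := by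
  have hpow : ∀ k : ℕ, x k = (-1) ^ k * x 0 := by
    intro k
    induction k with
    | zero => simp
    | succ k ih => rw [Nat.cast_succ, hshift, ih, pow_succ, mul_neg_one, neg_mul]
  have hcycle := hpow n
  rw [ZMod.natCast_self] at hcycle
  refine (neg_one_pow_eq_one_iff_even (by norm_num)).mp (mul_right_cancel₀ hx ?_)
  rw [one_mul, ← hcycle]

theorem sign_add_one_eq_of_shift (hf : ∀ i, f i = 1 ∨ f i = -1) (hx : ∀ i, x i ≠ 0)
    (hshift : ∀ i, x (i + 1) = f i * x i ∧ x (i - 1) = f i * x i) (i : ZMod n) :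
    f (i + 1) = f i := by
  have hround : f (i + 1) * f i * x i = 1 * x i := by
    simpa [(hshift i).1, mul_assoc] using ((hshift (i + 1)).2).symm
  have hsq : f i * f i = 1 := by rcases hf i with h | h <;> simp [h]
  calc f (i + 1) = f (i + 1) * f i * f i := by rw [mul_assoc, hsq, mul_one]
    _ = f i := by rw [mul_right_cancel₀ (hx i) hround, one_mul]

end Ring

variable [CommRing R] [LinearOrder R] [IsStrictOrderedRing R] {f x : ZMod n → R}

theorem signedCycleMatrix_mulVec_eq_zero_iff [NeZero n] (h2 : (2 : ZMod n) ≠ 0)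
    (hf : ∀ i, f i = 1 ∨ f i = -1) :
    signedCycleMatrix f *ᵥ x = 0 ↔ ∀ i, x (i + 1) = f i * x i ∧ x (i - 1) = f i * x i := by
  have habs : ∀ i, |f i * x i| = |x i| := fun i => by rcases hf i with h | h <;> simp [h]
  simp only [funext_iff, signedCycleMatrix_mulVec h2, Pi.zero_apply]
  constructor
  · intro hrow
    obtain ⟨i₀, -, hi₀⟩ :=
      Finset.univ.exists_max_image (fun j => |x j|) Finset.univ_nonempty
    have hle : ∀ j, |x j| ≤ |x i₀| := fun j => hi₀ j (Finset.mem_univ j)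
    have hshift : ∀ i, |x i| = |x i₀| → x (i + 1) = f i * x i ∧ x (i - 1) = f i * x i :=
      fun i hi => eq_of_abs_le_of_add_eq_two_mul (by rw [habs, hi]; exact hle _)
        (by rw [habs, hi]; exact hle _) (by linear_combination -(hrow i))
    have hmax : ∀ i, |x i| = |x i₀| :=
      ZMod.forall_of_add_one_s7 rfl fun i hi => by rw [(hshift i hi).1, habs, hi]
    exact fun i => hshift i (hmax i)
  · intro hshift i
    rw [(hshift i).1, (hshift i).2]
    ring

end SignedCycle

theorem stmt_7 (n : ℕ) (hn : 3 ≤ n) [NeZero n] (f : ZMod n → ℝ)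
    (hf : ∀ i, f i = 1 ∨ f i = -1)
    (B : Matrix (ZMod n) (ZMod n) ℝ)
    (hB : ∀ i j, B i j =
      if i = j then 2 * f i else if j = i + 1 ∨ j = i - 1 then -1 else 0) :
    B.det = 0 ↔ ((∀ i, f i = 1) ∨ ((∀ i, f i = -1) ∧ Even n)) := by
  obtain rfl : B = signedCycleMatrix f := Matrix.ext hB
  rw [← Matrix.exists_mulVec_eq_zero_iff]
  simp only [signedCycleMatrix_mulVec_eq_zero_iff (ZMod.two_ne_zero_of_three_le hn) hf]
  constructor
  · rintro ⟨x, hx, hshift⟩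
    have hx' := ZMod.ne_zero_of_apply_add_one_eq_mul
      (fun i => by rcases hf i with h | h <;> simp [h]) (fun i => (hshift i).1) hx
    have hconst : ∀ i, f i = f 0 :=
      ZMod.forall_of_add_one_s7 rfl fun i hi => (sign_add_one_eq_of_shift hf hx' hshift i).trans hi
    rcases hf 0 with h0 | h0
    · exact Or.inl fun i => (hconst i).trans h0
    · refine Or.inr ⟨fun i => (hconst i).trans h0,
        ZMod.even_of_apply_add_one_eq_neg (fun i => ?_) (hx' 0)⟩
      rw [(hshift i).1, hconst i, h0, neg_one_mul]
  · rintro (h1 | ⟨hneg, heven⟩)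
    · exact ⟨1, one_ne_zero, fun i => by simp [h1]⟩
    · refine ⟨fun i => (-1) ^ i.val, Function.ne_iff.mpr ⟨0, by simp⟩, fun i => ?_⟩
      have hprev := neg_one_pow_val_add_one (R := ℝ) heven (i - 1)
      rw [sub_add_cancel] at hprev
      simp only [hneg, neg_one_pow_val_add_one heven, hprev]
      constructor <;> ring
end

section
/- Let W be a group generated by s_1, ..., s_5 with s_i² = 1 for all i, (s_1 s_3)² = (s_1 s_4)² = (s_2 s_4)² = (s_2 s_5)² = (s_3 s_5)² = 1, (s_1 s_2)³ = (s_2 s_3)³ = (s_3 s_4)³ = (s_4 s_5)³ = (s_1 s_5)³ = 1, and (s_1 · s_2 s_3 s_4 s_5 s_4 s_3 s_2)² = 1. Setting s'_0 = s_2 s_3 s_4 s_5 s_4 s_3 s_2, the relation (s_1 s_5)³ = 1 follows from the other relations together with (s_1 s'_0)² = 1; explicitly, (s_1 s_5)³ = (s_1 s_2)³ = 1 using s_5 = s_4 s_3 s_2 s'_0 s_2 s_3 s_4, the commutations s_1 s_3 = s_3 s_1, s_1 s_4 = s_4 s_1, s_1 s'_0 = s'_0 s_1, and the braid relation s_2 s'_0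 s_2 = s'_0 s_2 s'_0. -/
/-!
Every relation needed is an instance of one observation: if `a` commutes with `c`, then
`a * (c * x * c⁻¹)` is the conjugate of `a * x` by `c`, so `(a * x) ^ 3 = 1` transfers to it.
For involutions the braid relation `b * c * b = c * b * c` exhibits `b * c * b` as such a
conjugate of `b`. Writing `u = s₄ s₅ s₄`, `t = s₃ u s₃` and `s'₀ = s₂ t s₂`, this gives in turn
`(s₃ u)³ = (s₂ t)³ = (s₂ s'₀)³ = 1`. Then `(s₁ s₂)³ = 1` transfers along the braid relation for
`s₂, s'₀` to `(s₁ t)³ = 1`, and conjugating by `s₃` and `s₄`, which commute with `s₁`,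
to `(s₁ u)³ = 1` and `(s₁ s₅)³ = 1`.
-/

section Conjugation

variable {G : Type*} [Group G] {a b c : G}

theorem inv_eq_self_of_sq_eq_one (h : a ^ 2 = 1) : a⁻¹ = a :=
  inv_eq_of_mul_eq_one_right (by rwa [← sq])

theorem sq_mul_mul_eq_one (hb : b ^ 2 = 1) (hc : c ^ 2 = 1) : (b * c * b) ^ 2 = 1 := by
  calc (b * c * b) ^ 2 = (b * c * b⁻¹) ^ 2 := by rw [inv_eq_self_of_sq_eq_one hb]
    _ = 1 := by rw [conj_pow, hc, mul_one, mul_inv_cancel]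

theorem commute_of_sq_mul_eq_one (ha : a ^ 2 = 1) (hb : b ^ 2 = 1) (h : (a * b) ^ 2 = 1) :
    Commute a b := by
  have := inv_eq_self_of_sq_eq_one h
  rwa [mul_inv_rev, inv_eq_self_of_sq_eq_one ha, inv_eq_self_of_sq_eq_one hb, eq_comm] at this

theorem braid_of_pow_three_eq_one (ha : a ^ 2 = 1) (hb : b ^ 2 = 1) (h : (a * b) ^ 3 = 1) :
    a * b * a = b * a * b := by
  rw [pow_succ, mul_eq_one_iff_eq_inv, mul_inv_rev, inv_eq_self_of_sq_eq_one ha,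
    inv_eq_self_of_sq_eq_one hb, sq] at h
  calc a * b * a = a * b * (a * b) * b⁻¹ := by group
    _ = b * a * b := by rw [h, inv_eq_self_of_sq_eq_one hb]

theorem Commute.mul_conj_pow (hac : Commute a c) (x : G) (n : ℕ) :
    (a * (c * x * c⁻¹)) ^ n = c * (a * x) ^ n * c⁻¹ := by
  rw [← conj_pow, ← mul_assoc, ← mul_assoc, hac.eq, mul_assoc c a]

theorem Commute.mul_conj_pow_eq_one_iff (hac : Commute a c) (x : G) (n : ℕ) :
    (a * (c * x * c⁻¹)) ^ n = 1 ↔ (a * x) ^ n = 1 := by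
  rw [hac.mul_conj_pow, conj_eq_one_iff]

theorem Commute.mul_conj_pow_eq_one_iff_of_sq_eq_one (hac : Commute a c) (hc : c ^ 2 = 1)
    (x : G) (n : ℕ) :
    (a * (c * x * c)) ^ n = 1 ↔ (a * x) ^ n = 1 := by
  simpa only [inv_eq_self_of_sq_eq_one hc] using hac.mul_conj_pow_eq_one_iff x n

end Conjugation

theorem stmt_10 {W : Type*} [Group W] (s1 s2 s3 s4 s5 : W)
    (h1 : s1 ^ 2 = 1) (h2 : s2 ^ 2 = 1) (h3 : s3 ^ 2 = 1)
    (h4 : s4 ^ 2 = 1) (h5 : s5 ^ 2 = 1)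
    (c13 : (s1 * s3) ^ 2 = 1) (c14 : (s1 * s4) ^ 2 = 1)
    (c24 : (s2 * s4) ^ 2 = 1) (c25 : (s2 * s5) ^ 2 = 1)
    (c35 : (s3 * s5) ^ 2 = 1)
    (b12 : (s1 * s2) ^ 3 = 1) (b23 : (s2 * s3) ^ 3 = 1)
    (b34 : (s3 * s4) ^ 3 = 1) (b45 : (s4 * s5) ^ 3 = 1)
    (h0 : (s1 * (s2 * s3 * s4 * s5 * s4 * s3 * s2)) ^ 2 = 1) :
    (s1 * s5) ^ 3 = 1 := by
  set u := s4 * s5 * s4 with hu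
  set t := s3 * u * s3 with ht
  set s0 := s2 * t * s2 with hs0
  have hu2 : u ^ 2 = 1 := sq_mul_mul_eq_one h4 h5
  have hs02 : s0 ^ 2 = 1 := sq_mul_mul_eq_one h2 (sq_mul_mul_eq_one h3 hu2)
  have k13 := commute_of_sq_mul_eq_one h1 h3 c13
  have k14 := commute_of_sq_mul_eq_one h1 h4 c14
  have k24 := commute_of_sq_mul_eq_one h2 h4 c24
  have k2u : Commute s2 u := (k24.mul_right (commute_of_sq_mul_eq_one h2 h5 c25)).mul_right k24
  have k10 : Commute s1 s0 :=
    commute_of_sq_mul_eq_one h1 hs02 (by simpa only [hs0, ht, hu, mul_assoc] using h0)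
  have b3u : (s3 * u) ^ 3 = 1 := by
    rwa [hu, braid_of_pow_three_eq_one h4 h5 b45,
      (commute_of_sq_mul_eq_one h3 h5 c35).mul_conj_pow_eq_one_iff_of_sq_eq_one h5]
  have b2t : (s2 * t) ^ 3 = 1 := by
    rwa [ht, braid_of_pow_three_eq_one h3 hu2 b3u, k2u.mul_conj_pow_eq_one_iff_of_sq_eq_one hu2]
  have b20 : (s2 * s0) ^ 3 = 1 := by
    rwa [hs0, (Commute.refl s2).mul_conj_pow_eq_one_iff_of_sq_eq_one h2]
  have ht0 : t = s2 * s0 * s2 :=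
    calc t = s2⁻¹ * (s2 * t * s2⁻¹) * s2 := by group
      _ = s2 * s0 * s2 := by rw [hs0, inv_eq_self_of_sq_eq_one h2]
  have b1t : (s1 * t) ^ 3 = 1 := by
    rwa [ht0, braid_of_pow_three_eq_one h2 hs02 b20, k10.mul_conj_pow_eq_one_iff_of_sq_eq_one hs02]
  have b1u : (s1 * u) ^ 3 = 1 := by
    rwa [ht, k13.mul_conj_pow_eq_one_iff_of_sq_eq_one h3] at b1t
  rwa [hu, k14.mul_conj_pow_eq_one_iff_of_sq_eq_one h4] at b1u
end

section
/- Let τ_1, ..., τ_n be real n×n matrices such that τ_i is supported on its i-th row only, and such that for each product τ_{i_1} ⋯ τ_{i_k}, the i_1-th row is a scalar multiple of the i_k-th row of τ_{i_k}. Denote by ν_q ∈ ℝ^n the q-th row of τ_q, and assume {ν_1, ..., ν_n} is linearly independent. If a finite sum of nonzero scalar multiples of such products equals zero, then for every ordered pair (p, q), the sub-sum of terms with leftmost factor τ_p and rightmost factor τ_q equals zero. -/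
/-!
Each word `τ_{i_1} ⋯ τ_{i_k}` is a scalar multiple of the matrix whose only nonzero row is the
`i_1`-th one, equal to `ν_{i_k}`. Since the `ν_q` are linearly independent, these single-row
matrices, indexed by the pair `(i_1, i_k)`, are linearly independent too, so a vanishing sum of
words splits into vanishing sums over the words with given first and last letter.
-/

open Finset Submodule

theorem Pi.linearIndependent_single_prod {η κ R M : Type*} [Semiring R] [AddCommMonoid M]
    [Module R M] [DecidableEq η] {v : κ → M} (hv : LinearIndependent R v) :
    LinearIndependent R fun pq : η × κ ↦ Pi.single (M := fun _ ↦ M) pq.1 (v pq.2) :=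
  (Pi.linearIndependent_single (fun _ ↦ v) fun _ ↦ hv).comp (Equiv.sigmaEquivProd η κ).symm
    (Equiv.injective _)

theorem LinearIndependent.sum_filter_eq_zero {ι κ R M : Type*} [Ring R] [AddCommGroup M]
    [Module R M] [DecidableEq κ] {v : κ → M} (hv : LinearIndependent R v) {s : Finset ι}
    {x : ι → M} (k : ι → κ) (hx : ∀ t ∈ s, x t ∈ R ∙ v (k t)) (hsum : ∑ t ∈ s, x t = 0)
    (q : κ) : ∑ t ∈ s with k t = q, x t = 0 := by
  by_cases hq : q ∈ s.image k
  · have hfiber : ∀ q' ∈ s.image k, ∑ t ∈ s with k t = q', x t ∈ R ∙ v q' := fun q' _ ↦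
      sum_mem fun t ht ↦ (mem_filter.mp ht).2 ▸ hx t (mem_filter.mp ht).1
    refine (iSupIndep_iff_finsetSum_eq_zero_imp_eq_zero _).mp hv.iSupIndep_span_singleton
      (s.image k) _ hfiber ?_ q hq
    rw [sum_fiberwise_of_maps_to fun t ht ↦ mem_image_of_mem k ht, hsum]
  · refine sum_eq_zero fun t ht ↦ absurd ?_ hq
    exact (mem_filter.mp ht).2 ▸ mem_image_of_mem k (mem_filter.mp ht).1

section RowSupported

variable {m R : Type*} [Fintype m] [DecidableEq m] [Semiring R] {τ : m → Matrix m m R}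

theorem prod_map_apply_eq_zero_of_head?_ne (hsupp : ∀ i j, j ≠ i → τ i j = 0) {l : List m} (hl : l ≠ [])
    {j : m} (hj : l.head? ≠ some j) : (l.map τ).prod j = 0 := by
  obtain ⟨a, l, rfl⟩ := List.exists_cons_of_ne_nil hl
  have hja : j ≠ a := fun h ↦ hj (h ▸ rfl)
  ext k
  simp [Matrix.mul_apply, hsupp a j hja]

theorem prod_map_eq_smul_single (hsupp : ∀ i j, j ≠ i → τ i j = 0) {l : List m} {p : m}
    (hp : l.head? = some p) {r : R} {v : m → R} (hr : (l.map τ).prod p = r • v) :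
    (l.map τ).prod = r • Matrix.of (Pi.single p v) := by
  ext j k
  by_cases hj : j = p
  · subst hj
    simp [congrFun hr k]
  · have hl : l ≠ [] := by rintro rfl; simp at hp
    have hj' : l.head? ≠ some j := by rw [hp]; exact fun h ↦ hj (Option.some_injective _ h).symm
    simp [prod_map_apply_eq_zero_of_head?_ne hsupp hl hj', hj]

end RowSupported

theorem stmt_15_general {n : ℕ} (τ : Fin n → Matrix (Fin n) (Fin n) ℝ)
    (hsupp : ∀ i j, j ≠ i → ∀ k, τ i j k = 0)
    (hrow : ∀ (l : List (Fin n)) (p q : Fin n),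
      l.head? = some p → l.getLast? = some q →
      ∃ r : ℝ, (l.map τ).prod p = r • τ q q)
    (hind : LinearIndependent ℝ (fun q : Fin n => τ q q))
    {ι : Type*} (T : Finset ι)
    (c : ι → ℝ)
    (w : ι → List (Fin n)) (hw : ∀ t ∈ T, w t ≠ [])
    (hsum : ∑ t ∈ T, c t • ((w t).map τ).prod = 0) :
    ∀ p q : Fin n,
      ∑ t ∈ T.filter (fun t => (w t).head? = some p ∧ (w t).getLast? = some q),
        c t • ((w t).map τ).prod = 0 := by
  intro p q
  have hsupp' : ∀ i j, j ≠ i → τ i j = 0 := fun i j h ↦ funext (hsupp i j h)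
  have hends : ∀ t ∈ T, ∃ a b, (w t).head? = some a ∧ (w t).getLast? = some b := fun t ht ↦
    ⟨_, _, List.head?_eq_some_head (hw t ht), List.getLast?_eq_some_getLast (hw t ht)⟩
  -- the defaults are never used, since every `w t` with `t ∈ T` is nonempty
  let ends : ι → Fin n × Fin n := fun t ↦ ((w t).head?.getD p, (w t).getLast?.getD q)
  let e : Fin n × Fin n → Matrix (Fin n) (Fin n) ℝ :=
    fun pq ↦ Matrix.of (Pi.single pq.1 (τ pq.2 pq.2))
  have he : LinearIndependent ℝ e :=
    (Pi.linearIndependent_single_prod hind).map' (Matrix.ofLinearEquiv ℝ).toLinearMap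
      (LinearEquiv.ker _)
  have hmem : ∀ t ∈ T, c t • ((w t).map τ).prod ∈ ℝ ∙ e (ends t) := by
    intro t ht
    obtain ⟨a, b, ha, hb⟩ := hends t ht
    obtain ⟨r, hr⟩ := hrow _ _ _ ha hb
    simp only [ends, ha, hb, Option.getD_some]
    rw [prod_map_eq_smul_single hsupp' ha hr, smul_smul]
    exact smul_mem _ _ (mem_span_singleton_self _)
  convert he.sum_filter_eq_zero ends hmem hsum (p, q) using 1
  refine sum_congr (filter_congr fun t ht ↦ ?_) fun _ _ ↦ rfl
  obtain ⟨a, b, ha, hb⟩ := hends t ht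
  simp [ends, ha, hb]

theorem stmt_15 {n : ℕ} (τ : Fin n → Matrix (Fin n) (Fin n) ℝ)
    (hsupp : ∀ i j, j ≠ i → ∀ k, τ i j k = 0)
    (hrow : ∀ (l : List (Fin n)) (p q : Fin n),
      l.head? = some p → l.getLast? = some q →
      ∃ r : ℝ, (l.map τ).prod p = r • τ q q)
    (hind : LinearIndependent ℝ (fun q : Fin n => τ q q))
    {ι : Type*} [DecidableEq ι] (T : Finset ι)
    (c : ι → ℝ) (hc : ∀ t ∈ T, c t ≠ 0)
    (w : ι → List (Fin n)) (hw : ∀ t ∈ T, w t ≠ [])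
    (hsum : ∑ t ∈ T, c t • ((w t).map τ).prod = 0) :
    ∀ p q : Fin n,
      ∑ t ∈ T.filter (fun t => (w t).head? = some p ∧ (w t).getLast? = some q),
        c t • ((w t).map τ).prod = 0 :=
  stmt_15_general τ hsupp hrow hind T c w hw hsum
end

section
/- Let τ_i, τ_j be real n×n matrices with τ_i² = -2τ_i, τ_j² = -2τ_j, τ_i τ_j τ_i = α τ_i, τ_j τ_i τ_j = α τ_j for α ∈ {±1}. Then for every positive integer r there exist real numbers ρ_d, ρ_{ij}, ρ_{ji} such that [(1+τ_i)(1+τ_j)]^r = 1 + ρ_d τ_i + ρ_{ij} τ_i τ_j + ρ_{ji} τ_j τ_i + ρ_d τ_j; in particular the coefficients of τ_i and τ_j coincide. -/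
/-!
The words in `a`, `b` reduce to `1, a, b, ab, ba`, so the powers of `(1 + a)(1 + b)` live in
their span. Multiplying `1 + s a + x ab + y ba + s b` (with `s = x + y`) by `(1 + a)(1 + b)`
gives the same shape again with `(x, y) ↦ (1 - s + (α - 1) x, x)`. For `a² = c a`, `b² = c b` the
coefficient of `b` would exceed that of `a` by `α y (2 + c)`; the value `c = -2` is exactly what
keeps the two equal.
-/

variable {R A : Type*} [CommRing R] [Ring A] [Algebra R A]

def symmCombination (a b : A) (x y : R) : A :=
  1 + (x + y) • a + x • (a * b) + y • (b * a) + (x + y) • b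

theorem symmCombination_mul_one_add_mul_one_add {a b : A} {α : R}
    (ha : a * a = -2 * a) (hb : b * b = -2 * b)
    (haba : a * b * a = α • a) (hbab : b * a * b = α • b) (x y : R) :
    symmCombination a b x y * ((1 + a) * (1 + b))
      = symmCombination a b (1 - (x + y) + (α - 1) * x) x := by
  have neg_two_mul (z : A) : -2 * z = (-2 : R) • z := by
    rw [neg_mul, two_mul, neg_smul, two_smul]
  rw [neg_two_mul] at ha hb
  rw [mul_assoc] at haba hbab
  have haa (z : A) : a * (a * z) = (-2 : R) • (a * z) := by
    rw [← mul_assoc, ha, smul_mul_assoc]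
  unfold symmCombination
  simp only [mul_add, add_mul, mul_one, one_mul, mul_assoc, smul_mul_assoc, mul_smul_comm,
    smul_smul, ha, hb, haba, hbab, haa]
  module

theorem exists_pow_one_add_mul_one_add_eq_symmCombination {a b : A} {α : R}
    (ha : a * a = -2 * a) (hb : b * b = -2 * b)
    (haba : a * b * a = α • a) (hbab : b * a * b = α • b) (r : ℕ) :
    ∃ x y : R, ((1 + a) * (1 + b)) ^ r = symmCombination a b x y := by
  induction r with
  | zero => exact ⟨0, 0, by simp [symmCombination]⟩
  | succ r ih =>
    obtain ⟨x, y, h⟩ := ih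
    exact ⟨_, _, by rw [pow_succ, h, symmCombination_mul_one_add_mul_one_add ha hb haba hbab]⟩

theorem stmt_16_general {n : ℕ} (τi τj : Matrix (Fin n) (Fin n) ℝ) (α : ℝ)
    (hi : τi * τi = -2 * τi) (hj : τj * τj = -2 * τj)
    (hiji : τi * τj * τi = α • τi) (hjij : τj * τi * τj = α • τj) :
    ∀ r : ℕ, 0 < r →
      ∃ ρd ρij ρji : ℝ,
        ((1 + τi) * (1 + τj)) ^ r
          = 1 + ρd • τi + ρij • (τi * τj) + ρji • (τj * τi) + ρd • τj := by
  intro r _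
  obtain ⟨x, y, h⟩ := exists_pow_one_add_mul_one_add_eq_symmCombination hi hj hiji hjij r
  exact ⟨x + y, x, y, h⟩

theorem stmt_16 {n : ℕ} (τi τj : Matrix (Fin n) (Fin n) ℝ) (α : ℝ)
    (hα : α = 1 ∨ α = -1)
    (hi : τi * τi = -2 * τi) (hj : τj * τj = -2 * τj)
    (hiji : τi * τj * τi = α • τi) (hjij : τj * τi * τj = α • τj) :
    ∀ r : ℕ, 0 < r →
      ∃ ρd ρij ρji : ℝ,
        ((1 + τi) * (1 + τj)) ^ r
          = 1 + ρd • τi + ρij • (τi * τj) + ρji • (τj * τi) + ρd • τj :=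
  stmt_16_general τi τj α hi hj hiji hjij
end
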